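/- arXiv:2209.12022 — 2 statements merged into one kernel-verified Lean document; each statement's English description precedes it below -/
import Mathlib

section
/- Valiron's inequality: for a power series f(z) = Σ a_k z^k with radius of convergence R, and 0 ≤ r < r₁ < R, the maximum modulus satisfies M(r,f) ≤ m(r₁,f)·(ν(r) + r₁/(r₁ - r)), where m(r,f) = max_k |a_k| r^k is the maximal term and ν(r) is the central index (the largest k for which |a_k| r^k = m(r,f)). -/
/-!
Cauchy's estimate already does the work: `‖a k‖ r₁ ^ k ≤ m(r₁)` for every `k`, so on `|z| = r`
the series is dominated termwise by the geometric series `m(r₁) Σ (r / r₁) ^ k = m(r₁) r₁ / (r₁ - r)`,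
and `m(r₁) ν(r) ≥ 0`.
-/

section CauchyEstimate

variable {𝕜 : Type*} [NormedDivisionRing 𝕜] {r₁ m₁ : ℝ}

theorem norm_mul_pow_le_mul_div_pow {c : 𝕜} {k : ℕ} (hr₁ : 0 < r₁) (hc : ‖c‖ * r₁ ^ k ≤ m₁)
    (z : 𝕜) : ‖c * z ^ k‖ ≤ m₁ * (‖z‖ / r₁) ^ k := by
  calc ‖c * z ^ k‖ = ‖c‖ * r₁ ^ k * (‖z‖ / r₁) ^ k := by
        rw [norm_mul, norm_pow, div_pow, mul_assoc, mul_div_cancel₀ _ (pow_pos hr₁ k).ne']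
    _ ≤ m₁ * (‖z‖ / r₁) ^ k := by gcongr

theorem norm_tsum_mul_pow_le_of_forall_norm_mul_pow_le {a : ℕ → 𝕜}
    (hm₁ : ∀ k, ‖a k‖ * r₁ ^ k ≤ m₁) {z : 𝕜} (hz : ‖z‖ < r₁) :
    ‖∑' k, a k * z ^ k‖ ≤ m₁ * (r₁ / (r₁ - ‖z‖)) := by
  have hr₁ : 0 < r₁ := (norm_nonneg z).trans_lt hz
  have hq : ‖z‖ / r₁ < 1 := (div_lt_one hr₁).mpr hz
  have hgeom := (hasSum_geometric_of_lt_one (by positivity) hq).mul_left m₁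
  rw [one_sub_div hr₁.ne', inv_div] at hgeom
  exact tsum_of_norm_bounded hgeom fun k => norm_mul_pow_le_mul_div_pow hr₁ (hm₁ k) z

end CauchyEstimate

theorem valiron_inequality_general
    (a : ℕ → ℂ) (r r₁ : ℝ) (m₁ : ℝ) (ν : ℕ)
    (hrr₁ : r < r₁)
    -- `m₁` is the maximal term at `r₁`
    (hm₁ : IsGreatest {x : ℝ | ∃ k : ℕ, x = ‖a k‖ * r₁ ^ k} m₁) :
    ∀ z : ℂ, ‖z‖ = r →
      ‖∑' k : ℕ, a k * z ^ k‖ ≤ m₁ * ((ν : ℝ) + r₁ / (r₁ - r)) := by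
  rintro z rfl
  have hbound : ∀ k, ‖a k‖ * r₁ ^ k ≤ m₁ := fun k => hm₁.2 ⟨k, rfl⟩
  have hm₁_nonneg : 0 ≤ m₁ := (norm_nonneg (a 0)).trans (by simpa using hbound 0)
  calc ‖∑' k : ℕ, a k * z ^ k‖ ≤ m₁ * (r₁ / (r₁ - ‖z‖)) :=
        norm_tsum_mul_pow_le_of_forall_norm_mul_pow_le hbound hrr₁
    _ ≤ m₁ * ((ν : ℝ) + r₁ / (r₁ - ‖z‖)) := by gcongr; exact le_add_of_nonneg_left ν.cast_nonneg

/-- Valiron's inequality: for a power series `f(z) = Σ a_k z^k` with radius of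
convergence `R` (possibly infinite), `0 ≤ r < r₁ < R`, maximal term `m₁` at `r₁`
and central index `ν` at `r`, every value of `f` on the circle `|z| = r` is
bounded by `m₁ * (ν + r₁/(r₁ - r))`; hence `M(r,f) ≤ m₁ * (ν + r₁/(r₁-r))`. -/
theorem valiron_inequality
    (a : ℕ → ℂ) (R : EReal) (r r₁ : ℝ) (m m₁ : ℝ) (ν : ℕ)
    (hr : 0 ≤ r) (hrr₁ : r < r₁) (hr₁R : (r₁ : EReal) < R)
    (hsum : ∀ z : ℂ, (‖z‖ : EReal) < R → Summable (fun k => a k * z ^ k))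
    (hne : ∃ k, a k ≠ 0)
    -- `m` is the maximal term at `r` and `ν` is the central index at `r`
    (hm : IsGreatest {x : ℝ | ∃ k : ℕ, x = ‖a k‖ * r ^ k} m)
    (hν : ‖a ν‖ * r ^ ν = m ∧
      ∀ k : ℕ, ‖a k‖ * r ^ k = m → k ≤ ν)
    -- `m₁` is the maximal term at `r₁`
    (hm₁ : IsGreatest {x : ℝ | ∃ k : ℕ, x = ‖a k‖ * r₁ ^ k} m₁) :
    ∀ z : ℂ, ‖z‖ = r →
      ‖∑' k : ℕ, a k * z ^ k‖ ≤ m₁ * ((ν : ℝ) + r₁ / (r₁ - r)) :=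
  valiron_inequality_general a r r₁ m₁ ν hrr₁ hm₁
end

section
/- Central index growth inequality: for a power series f with radius of convergence R and 0 < r < r₁ < R, one has ν(r)·log(r₁/r) ≤ log m(r₁,f) − log m(r,f), where m is the maximal term and ν the central index. -/
/-! The central index `ν` realises the maximal term at `r`, so passing from `r` to `r₁` its term
grows by exactly `(r₁ / r) ^ ν`, and it still lies below the maximal term at `r₁`:
`m(r) (r₁ / r) ^ ν = |a_ν| r₁ ^ ν ≤ m(r₁)`. Taking logarithms gives the inequality. -/

section MaximalTerm

variable {E : Type*} [NormedAddCommGroup E] {a : ℕ → E} {r r₁ m m₁ : ℝ}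

lemma pos_of_isGreatest_norm_mul_pow (hr : 0 < r)
    (hm : IsGreatest {x : ℝ | ∃ k : ℕ, x = ‖a k‖ * r ^ k} m) (hne : ∃ k, a k ≠ 0) : 0 < m := by
  obtain ⟨k, hk⟩ := hne
  exact (mul_pos (norm_pos_iff.mpr hk) (pow_pos hr k)).trans_le (hm.2 ⟨k, rfl⟩)

lemma mul_div_pow_le_of_isGreatest_norm_mul_pow {ν : ℕ} (hr : 0 < r) (hν : ‖a ν‖ * r ^ ν = m)
    (hm₁ : IsGreatest {x : ℝ | ∃ k : ℕ, x = ‖a k‖ * r₁ ^ k} m₁) : m * (r₁ / r) ^ ν ≤ m₁ := by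
  have hterm : m * (r₁ / r) ^ ν = ‖a ν‖ * r₁ ^ ν := by
    rw [← hν, div_pow, mul_assoc, mul_div_cancel₀ _ (pow_ne_zero ν hr.ne')]
  exact hterm ▸ hm₁.2 ⟨ν, rfl⟩

end MaximalTerm

lemma Real.nat_mul_log_le_log_sub_log {m m₁ t : ℝ} {n : ℕ} (hm : 0 < m) (ht : 0 < t)
    (h : m * t ^ n ≤ m₁) : n * Real.log t ≤ Real.log m₁ - Real.log m := by
  have hlog := Real.log_le_log (by positivity) h
  rw [Real.log_mul hm.ne' (by positivity), Real.log_pow] at hlog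
  linarith

theorem central_index_growth_general
    (a : ℕ → ℂ) (r r₁ : ℝ) (m m₁ : ℝ) (ν : ℕ)
    (hr : 0 < r) (hrr₁ : r < r₁)
    (hne : ∃ k, a k ≠ 0)
    (hm : IsGreatest {x : ℝ | ∃ k : ℕ, x = ‖a k‖ * r ^ k} m)
    (hν : ‖a ν‖ * r ^ ν = m ∧
      ∀ k : ℕ, ‖a k‖ * r ^ k = m → k ≤ ν)
    (hm₁ : IsGreatest {x : ℝ | ∃ k : ℕ, x = ‖a k‖ * r₁ ^ k} m₁) :
    (ν : ℝ) * Real.log (r₁ / r) ≤ Real.log m₁ - Real.log m :=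
  Real.nat_mul_log_le_log_sub_log (pos_of_isGreatest_norm_mul_pow hr hm hne)
    (div_pos (hr.trans hrr₁) hr) (mul_div_pow_le_of_isGreatest_norm_mul_pow hr hν.1 hm₁)

/-- Central index growth inequality: `ν(r) · log(r₁/r) ≤ log m(r₁) − log m(r)`
for `0 < r < r₁ < R`, where `m` is the maximal term and `ν` the central index. -/
theorem central_index_growth
    (a : ℕ → ℂ) (R : EReal) (r r₁ : ℝ) (m m₁ : ℝ) (ν : ℕ)
    (hr : 0 < r) (hrr₁ : r < r₁) (hr₁R : (r₁ : EReal) < R)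
    (hsum : ∀ z : ℂ, (‖z‖ : EReal) < R → Summable (fun k => a k * z ^ k))
    (hne : ∃ k, a k ≠ 0)
    (hm : IsGreatest {x : ℝ | ∃ k : ℕ, x = ‖a k‖ * r ^ k} m)
    (hν : ‖a ν‖ * r ^ ν = m ∧
      ∀ k : ℕ, ‖a k‖ * r ^ k = m → k ≤ ν)
    (hm₁ : IsGreatest {x : ℝ | ∃ k : ℕ, x = ‖a k‖ * r₁ ^ k} m₁) :
    (ν : ℝ) * Real.log (r₁ / r) ≤ Real.log m₁ - Real.log m :=
  central_index_growth_general a r r₁ m m₁ ν hr hrr₁ hne hm hν hm₁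
end
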